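/- Let g : [a,b] → ℝ be twice continuously differentiable with |g''(x)| ≤ M for all x ∈ [a,b]. Then |∫_a^b g(x) dx − ((b−a)/2)(g(a)+g(b))| ≤ M(b−a)³/12. -/

import Mathlib

/-!
Integrating by parts twice against the Peano kernel `K x = (x - a) (b - x) / 2`, which vanishes at
both endpoints and has `K'' = -1`, turns the trapezoidal error into `-∫ K g''`. Since `K ≥ 0` on
`[a, b]`, the error is at most `M ∫ K = M (b - a)³ / 12`.
-/

open Set intervalIntegral

noncomputable def trapezoidKernel (a b x : ℝ) : ℝ := (x - a) * (b - x) / 2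

lemma hasDerivAt_trapezoidKernel (a b x : ℝ) :
    HasDerivAt (trapezoidKernel a b) ((a + b - 2 * x) / 2) x := by
  have h := (((hasDerivAt_id' x).sub_const a).mul ((hasDerivAt_id' x).const_sub b)).div_const 2
  exact h.congr_deriv (by ring)

lemma hasDerivAt_trapezoidKernel_deriv (a b x : ℝ) :
    HasDerivAt (fun x => (a + b - 2 * x) / 2) (-1) x := by
  have h := (((hasDerivAt_id' x).const_mul 2).const_sub (a + b)).div_const 2
  exact h.congr_deriv (by ring)

section TrapezoidKernel

variable {a b : ℝ}

lemma continuous_trapezoidKernel : Continuous (trapezoidKernel a b) := by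
  unfold trapezoidKernel
  fun_prop

lemma trapezoidKernel_nonneg {x : ℝ} (hx : x ∈ Icc a b) : 0 ≤ trapezoidKernel a b x :=
  div_nonneg (mul_nonneg (sub_nonneg.2 hx.1) (sub_nonneg.2 hx.2)) zero_le_two

lemma integral_trapezoidKernel : ∫ x in a..b, trapezoidKernel a b x = (b - a) ^ 3 / 12 := by
  have hF : ∀ x, HasDerivAt (fun x => ((b - a) * (x - a) ^ 2 / 2 - (x - a) ^ 3 / 3) / 2)
      (trapezoidKernel a b x) x := by
    intro x
    have h := ((((hasDerivAt_id' x).sub_const a).pow 2).const_mul (b - a) |>.div_const 2).sub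
      ((((hasDerivAt_id' x).sub_const a).pow 3).div_const 3) |>.div_const 2
    exact h.congr_deriv (by rw [trapezoidKernel]; push_cast; ring)
  rw [integral_eq_sub_of_hasDerivAt (fun x _ => hF x)
    (continuous_trapezoidKernel.intervalIntegrable a b)]
  ring

end TrapezoidKernel

theorem integral_sub_trapezoid_eq_neg_integral_trapezoidKernel_mul {a b : ℝ}
    {g g' g'' : ℝ → ℝ}
    (hg' : ∀ x ∈ uIcc a b, HasDerivAt g (g' x) x)
    (hg'' : ∀ x ∈ uIcc a b, HasDerivAt g' (g'' x) x)
    (hint : IntervalIntegrable g'' MeasureTheory.volume a b) :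
    (∫ x in a..b, g x) - (b - a) / 2 * (g a + g b) =
      -∫ x in a..b, trapezoidKernel a b x * g'' x := by
  have hg'_cont : ContinuousOn g' (uIcc a b) :=
    fun x hx => (hg'' x hx).continuousAt.continuousWithinAt
  have ibp₁ := integral_mul_deriv_eq_deriv_mul (fun x _ => hasDerivAt_trapezoidKernel a b x) hg''
    ((by fun_prop : Continuous fun x : ℝ => (a + b - 2 * x) / 2).intervalIntegrable a b) hint
  have ibp₂ := integral_mul_deriv_eq_deriv_mul
    (fun x _ => hasDerivAt_trapezoidKernel_deriv a b x) hg' intervalIntegrable_const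
    hg'_cont.intervalIntegrable
  rw [ibp₁, ibp₂]
  simp only [trapezoidKernel, neg_one_mul, integral_neg]
  ring

theorem abs_integral_trapezoidKernel_mul_le {a b M : ℝ} {f : ℝ → ℝ} (hab : a ≤ b)
    (hbound : ∀ x ∈ Ioc a b, |f x| ≤ M) :
    |∫ x in a..b, trapezoidKernel a b x * f x| ≤ M * (b - a) ^ 3 / 12 := by
  have hle : ∀ x ∈ Ioc a b, ‖trapezoidKernel a b x * f x‖ ≤ M * trapezoidKernel a b x := by
    intro x hx
    have hK := trapezoidKernel_nonneg (Ioc_subset_Icc_self hx)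
    rw [Real.norm_eq_abs, abs_mul, abs_of_nonneg hK, mul_comm M]
    exact mul_le_mul_of_nonneg_left (hbound x hx) hK
  calc |∫ x in a..b, trapezoidKernel a b x * f x|
      ≤ ∫ x in a..b, M * trapezoidKernel a b x :=
        norm_integral_le_of_norm_le hab (Filter.Eventually.of_forall hle)
          ((continuous_const.mul continuous_trapezoidKernel).intervalIntegrable a b)
    _ = M * (b - a) ^ 3 / 12 := by
        rw [integral_const_mul, integral_trapezoidKernel, mul_div_assoc]

theorem stmt9_general (a b : ℝ) (hab : a < b) (M : ℝ) (g g' g'' : ℝ → ℝ)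
    (hg' : ∀ x ∈ Set.Icc a b, HasDerivAt g (g' x) x)
    (hg'' : ∀ x ∈ Set.Icc a b, HasDerivAt g' (g'' x) x)
    (hcont : ContinuousOn g'' (Set.Icc a b))
    (hbound : ∀ x ∈ Set.Icc a b, |g'' x| ≤ M) :
    |(∫ x in a..b, g x) - (b - a) / 2 * (g a + g b)| ≤ M * (b - a) ^ 3 / 12 := by
  rw [← uIcc_of_le hab.le] at hg' hg'' hcont
  rw [integral_sub_trapezoid_eq_neg_integral_trapezoidKernel_mul hg' hg''
    hcont.intervalIntegrable, abs_neg]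
  exact abs_integral_trapezoidKernel_mul_le hab.le
    fun x hx => hbound x (Ioc_subset_Icc_self hx)

/-- Trapezoidal rule error bound: if `g ∈ C²([a,b])` with `|g''| ≤ M`, then
`|∫_a^b g − (b−a)/2 (g(a)+g(b))| ≤ M (b−a)³ / 12`. -/
theorem stmt9 (a b : ℝ) (hab : a < b) (M : ℝ) (hM : 0 ≤ M) (g g' g'' : ℝ → ℝ)
    (hg' : ∀ x ∈ Set.Icc a b, HasDerivAt g (g' x) x)
    (hg'' : ∀ x ∈ Set.Icc a b, HasDerivAt g' (g'' x) x)
    (hcont : ContinuousOn g'' (Set.Icc a b))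
    (hbound : ∀ x ∈ Set.Icc a b, |g'' x| ≤ M) :
    |(∫ x in a..b, g x) - (b - a) / 2 * (g a + g b)| ≤ M * (b - a) ^ 3 / 12 :=
  stmt9_general a b hab M g g' g'' hg' hg'' hcont hbound
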